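/- arXiv:2402.07298 — 7 statements merged into one kernel-verified Lean document; each statement's English description precedes it below -/
import Mathlib

section
/- Let H be an M×N matrix with nonnegative entries and y ∈ {0,1}^M. If there exists z ∈ {0,1}^N with T(Hz) = y, then x_max := ¬T(Hᵀ(¬y)) satisfies T(H x_max) = y. -/
open Finset

/-- Positivity thresholding operator. -/
noncomputable def T {K : ℕ} (v : Fin K → ℝ) : Fin K → ℝ := fun k => if 0 < v k then 1 else 0

/-- Entrywise Boolean negation (swaps 0 and 1 on binary vectors). -/
def bneg {K : ℕ} (v : Fin K → ℝ) : Fin K → ℝ := fun k => 1 - v k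

/-- Matrix-vector product. -/
def mulv {M N : ℕ} (H : Fin M → Fin N → ℝ) (x : Fin N → ℝ) : Fin M → ℝ :=
  fun m => ∑ n, H m n * x n

/-- Transpose. -/
def tr {M N : ℕ} (H : Fin M → Fin N → ℝ) : Fin N → Fin M → ℝ := fun n m => H m n

/-- Silhouette operator. -/
noncomputable def S {M N : ℕ} (H : Fin M → Fin N → ℝ) (x : Fin N → ℝ) : Fin M → ℝ := T (mulv H x)

/-- Maximal solution candidate. -/
noncomputable def xmax {M N : ℕ} (H : Fin M → Fin N → ℝ) (y : Fin M → ℝ) : Fin N → ℝ :=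
  bneg (T (mulv (tr H) (bneg y)))

/-- A vector is binary if each entry is 0 or 1. -/
def IsBin {K : ℕ} (v : Fin K → ℝ) : Prop := ∀ k, v k = 0 ∨ v k = 1

/-
The support of `Hx` (for `H, x ≥ 0`) is the set of rows meeting the support of `x`, and
`xmax H y` is the indicator of the columns of `H` that meet no row with `y m = 0`. If `y = T(Hz)`
with `z` binary, every column in the support of `z` meets only rows with `y m = 1`, so `z ≤ xmax`
and `T(H xmax) ≥ y`; conversely every column in the support of `xmax` meets only such rows, so
`T(H xmax) ≤ y`.
-/

lemma T_apply_eq_one_iff {K : ℕ} (v : Fin K → ℝ) (k : Fin K) : T v k = 1 ↔ 0 < v k := by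
  by_cases h : 0 < v k <;> simp [T, h]

lemma T_le_one {K : ℕ} (v : Fin K → ℝ) (k : Fin K) : T v k ≤ 1 := by
  unfold T; split_ifs <;> norm_num

lemma T_apply_eq_T_apply_iff {K : ℕ} (v w : Fin K → ℝ) (k : Fin K) :
    T v k = T w k ↔ (0 < v k ↔ 0 < w k) := by
  by_cases hv : 0 < v k <;> by_cases hw : 0 < w k <;> simp [T, hv, hw]

lemma IsBin.nonneg {K : ℕ} {v : Fin K → ℝ} (hv : IsBin v) (k : Fin K) : 0 ≤ v k := by
  rcases hv k with h | h <;> simp [h]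

lemma zero_lt_mulv_iff {M N : ℕ} {H : Fin M → Fin N → ℝ} (hH : ∀ m n, 0 ≤ H m n)
    {x : Fin N → ℝ} (hx : ∀ n, 0 ≤ x n) (m : Fin M) :
    0 < mulv H x m ↔ ∃ n, 0 < H m n ∧ 0 < x n := by
  rw [mulv, Finset.sum_pos_iff_of_nonneg fun n _ => mul_nonneg (hH m n) (hx n)]
  simp [mul_pos_iff, (hH m _).not_gt]

lemma xmax_nonneg {M N : ℕ} (H : Fin M → Fin N → ℝ) (y : Fin M → ℝ) (n : Fin N) :
    0 ≤ xmax H y n :=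
  sub_nonneg.mpr (T_le_one _ n)

lemma zero_lt_xmax_iff {M N : ℕ} {H : Fin M → Fin N → ℝ} (hH : ∀ m n, 0 ≤ H m n)
    {y : Fin M → ℝ} (hy : ∀ m, y m ≤ 1) (n : Fin N) :
    0 < xmax H y n ↔ ∀ m, 0 < H m n → 1 ≤ y m := by
  have hT : 0 < xmax H y n ↔ ¬ 0 < mulv (tr H) (bneg y) n := by
    by_cases h : 0 < mulv (tr H) (bneg y) n <;> simp [xmax, bneg, T, h]
  rw [hT, zero_lt_mulv_iff (H := tr H) (x := bneg y) (fun n m => hH m n)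
    (fun m => sub_nonneg.mpr (hy m))]
  simp [tr, bneg]

theorem stmt_3_general {M N : ℕ} (H : Fin M → Fin N → ℝ) (hH : ∀ m n, 0 ≤ H m n)
    (y : Fin M → ℝ)
    (hex : ∃ z : Fin N → ℝ, IsBin z ∧ S H z = y) :
    S H (xmax H y) = y := by
  obtain ⟨z, hz, rfl⟩ := hex
  unfold S
  have hxmax : ∀ n, 0 < xmax H (T (mulv H z)) n ↔ ∀ m, 0 < H m n → 0 < mulv H z m := by
    intro n
    rw [zero_lt_xmax_iff hH (T_le_one _)]
    simp only [(T_le_one _ _).ge_iff_eq, T_apply_eq_one_iff]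
  funext m
  rw [T_apply_eq_T_apply_iff, zero_lt_mulv_iff hH (xmax_nonneg H _)]
  simp only [hxmax]
  constructor
  · rintro ⟨n, hmn, hn⟩
    exact hn m hmn
  · intro hm
    obtain ⟨n, hmn, hzn⟩ := (zero_lt_mulv_iff hH hz.nonneg m).mp hm
    exact ⟨n, hmn, fun m' hm'n => (zero_lt_mulv_iff hH hz.nonneg m').mpr ⟨n, hm'n, hzn⟩⟩

theorem stmt_3 {M N : ℕ} (H : Fin M → Fin N → ℝ) (hH : ∀ m n, 0 ≤ H m n)
    (y : Fin M → ℝ) (hy : IsBin y)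
    (hex : ∃ z : Fin N → ℝ, IsBin z ∧ S H z = y) :
    S H (xmax H y) = y :=
  stmt_3_general H hH y hex
end

section
/- Let H be an M×N matrix with nonnegative entries and y ∈ {0,1}^M. For every binary solution z (i.e., z ∈ {0,1}^N with T(Hz) = y), we have z[n] ≤ x_max[n] for all n, where x_max = ¬T(Hᵀ(¬y)). -/
open Finset

lemma T_eq_one_of_pos {K : ℕ} {v : Fin K → ℝ} {k : Fin K} (h : 0 < v k) : T v k = 1 :=
  if_pos h

lemma mul_eq_zero_of_mulv_nonpos {M N : ℕ} {H : Fin M → Fin N → ℝ} (hH : ∀ m n, 0 ≤ H m n)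
    {x : Fin N → ℝ} (hx : ∀ n, 0 ≤ x n) {m : Fin M} (hm : mulv H x m ≤ 0) (n : Fin N) :
    H m n * x n = 0 := by
  have hterm : ∀ k ∈ univ, 0 ≤ H m k * x k := fun k _ => mul_nonneg (hH m k) (hx k)
  have hsum : mulv H x m = 0 := le_antisymm hm (sum_nonneg hterm)
  exact (sum_eq_zero_iff_of_nonneg hterm).1 hsum n (mem_univ n)

/-- Each term `H m n * (1 - S H x m)` vanishes: either measurement `m` fires, or it is silent,
and then nonnegativity forces `H m n = 0` because `x n > 0`. -/
lemma xmax_S_eq_one_of_pos {M N : ℕ} {H : Fin M → Fin N → ℝ} (hH : ∀ m n, 0 ≤ H m n)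
    {x : Fin N → ℝ} (hx : ∀ n, 0 ≤ x n) {n : Fin N} (hn : 0 < x n) :
    xmax H (S H x) n = 1 := by
  have hback : mulv (tr H) (bneg (S H x)) n = 0 := by
    refine sum_eq_zero fun m _ => ?_
    by_cases hm : 0 < mulv H x m
    · simp [bneg, S, T_eq_one_of_pos hm]
    · have hHmn : H m n = 0 :=
        (mul_eq_zero.1 (mul_eq_zero_of_mulv_nonpos hH hx (not_lt.1 hm) n)).resolve_right hn.ne'
      simp [tr, hHmn]
  simp [xmax, bneg, T, hback]

theorem stmt_4_general {M N : ℕ} (H : Fin M → Fin N → ℝ) (hH : ∀ m n, 0 ≤ H m n)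
    (y : Fin M → ℝ)
    (z : Fin N → ℝ) (hz : IsBin z) (hsol : S H z = y) :
    ∀ n, z n ≤ xmax H y n := by
  intro n
  subst hsol
  rcases hz n with h | h
  · rw [h]
    exact xmax_nonneg H _ n
  · rw [h, xmax_S_eq_one_of_pos hH hz.nonneg (h ▸ one_pos)]

theorem stmt_4 {M N : ℕ} (H : Fin M → Fin N → ℝ) (hH : ∀ m n, 0 ≤ H m n)
    (y : Fin M → ℝ) (hy : IsBin y)
    (z : Fin N → ℝ) (hz : IsBin z) (hsol : S H z = y) :
    ∀ n, z n ≤ xmax H y n :=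
  stmt_4_general H hH y z hz hsol
end

section
/- Let H be an M×N matrix with nonnegative entries and y ∈ {0,1}^M. If z ∈ {0,1}^N satisfies ‖z‖₂² > ‖x_max‖₂², where x_max = ¬T(Hᵀ(¬y)), then T(Hz) ≠ y. -/
open Finset

theorem stmt_5 {M N : ℕ} (H : Fin M → Fin N → ℝ) (hH : ∀ m n, 0 ≤ H m n)
    (y : Fin M → ℝ) (hy : IsBin y)
    (z : Fin N → ℝ) (hz : IsBin z)
    (hnorm : ∑ n, (xmax H y n) ^ 2 < ∑ n, (z n) ^ 2) :
    S H z ≠ y := by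
  intro hSz
  have key : ∀ n, (z n) ^ 2 ≤ (xmax H y n) ^ 2 := by
    intro n
    rcases hz n with h0 | h1
    · have : 0 ≤ (xmax H y n) ^ 2 := sq_nonneg _
      simpa [h0] using this
    · -- z n = 1; show xmax n = 1, i.e. mulv (tr H) (bneg y) n ≤ 0
      have hx : xmax H y n = 1 := by
        unfold xmax bneg T
        by_contra hcon
        have hpos : 0 < mulv (tr H) (fun k => 1 - y k) n := by
          by_contra hnp
          simp [if_neg hnp] at hcon
        -- exists m with H m n > 0 and y m = 0
        have : ∃ m, 0 < H m n * (1 - y m) := by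
          by_contra hne
          push_neg at hne
          have : mulv (tr H) (fun k => 1 - y k) n ≤ 0 := by
            unfold mulv tr
            exact Finset.sum_nonpos fun m _ => hne m
          linarith
        obtain ⟨m, hm⟩ := this
        have hHmn : 0 < H m n := by
          rcases (hH m n).lt_or_eq with h | h
          · exact h
          · rw [← h] at hm; simp at hm
        have hym : y m = 0 := by
          rcases hy m with h | h
          · exact h
          · rw [h] at hm; simp at hm
        -- S H z m = y m = 0
        have hS : S H z m = y m := congrFun hSz m
        rw [hym] at hS
        unfold S T at hS
        have hnpos : ¬ (0 < mulv H z m) := by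
          intro hp; simp [hp] at hS
        have : H m n * z n ≤ mulv H z m := by
          unfold mulv
          exact Finset.single_le_sum (f := fun k => H m k * z k)
            (fun k _ => mul_nonneg (hH m k) (by rcases hz k with h | h <;> simp [h])) (mem_univ n)
        rw [h1] at this
        simp at this
        exact hnpos (lt_of_lt_of_le hHmn this)
      rw [hx, h1]
  exact absurd (Finset.sum_le_sum fun n _ => key n) (not_le.mpr hnorm)
end

section
/- Let H have nonnegative entries and y ∈ {0,1}^M. Then S(x_max(y))[m] ≤ y[m] for all m, where S(x) = T(Hx) and x_max(y) = ¬T(Hᵀ(¬y)). -/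
open Finset

theorem stmt_11 {M N : ℕ} (H : Fin M → Fin N → ℝ) (hH : ∀ m n, 0 ≤ H m n)
    (y : Fin M → ℝ) (hy : IsBin y) :
    ∀ m, S H (xmax H y) m ≤ y m := by
  intro m
  rcases hy m with h0 | h1
  · -- y m = 0: show each term of mulv is ≤ 0, hence S = 0
    have hterm : ∀ n, H m n * xmax H y n ≤ 0 := by
      intro n
      rcases le_or_gt (H m n) 0 with h | h
      · have : H m n = 0 := le_antisymm h (hH m n)
        simp [this]
      · have hpos : 0 < mulv (tr H) (bneg y) n := by
          have : H m n * (1 - y m) ≤ ∑ k, tr H n k * bneg y k := by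
            apply Finset.single_le_sum (f := fun k => tr H n k * bneg y k) (a := m)
            · intro k _
              rcases hy k with hk | hk <;>
                simp [tr, bneg, hk, hH k n, mul_nonneg (hH k n)]
            · exact Finset.mem_univ m
          simp only [tr, bneg] at this ⊢
          calc (0:ℝ) < H m n * (1 - y m) := by rw [h0]; simpa using h
            _ ≤ _ := this
        have : xmax H y n = 0 := by simp [xmax, bneg, T, hpos]
        simp [this]
    have hsum : mulv H (xmax H y) m ≤ 0 :=
      Finset.sum_nonpos (fun n _ => hterm n)
    have : S H (xmax H y) m = 0 := by
      simp [S, T, not_lt.mpr hsum]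
    simp [this, h0]
  · have : S H (xmax H y) m ≤ 1 := by
      simp only [S, T]; split <;> norm_num
    simpa [h1] using this
end

section
/- Let H have nonnegative entries. A solution to the silhouette problem T(Hz) = y (z binary) exists if and only if T(H x_max(y)) = y, where x_max(y) = ¬T(Hᵀ(¬y)). -/
open Finset

/-!
Since `H ≥ 0`, for binary `z` and `y` one has `T(Hz) ≤ y` iff `z ≤ x_max(y)`: both say that
`H m n = 0` whenever `y m = 0` and `z n = 1`. So `x_max(y)` is the largest binary `z` with
`T(Hz) ≤ y`, and as `z ↦ T(Hz)` is monotone, any solution `z` of `T(Hz) = y` gives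
`y = T(Hz) ≤ T(H x_max(y)) ≤ y`.
-/

section Binary

variable {K : ℕ} {a b : Fin K → ℝ}

lemma IsBin.nonneg_s12 (ha : IsBin a) : 0 ≤ a := fun k => by
  rcases ha k with h | h <;> simp [h]

lemma IsBin.le_iff_forall_eq_zero (ha : IsBin a) (hb : IsBin b) :
    a ≤ b ↔ ∀ k, b k = 0 → a k = 0 := by
  refine ⟨fun hab k hbk => le_antisymm (hbk ▸ hab k) (ha.nonneg_s12 k), fun h k => ?_⟩
  rcases hb k with hbk | hbk
  · simp [h k hbk, hbk]
  · rcases ha k with hak | hak <;> simp [hak, hbk]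

lemma IsBin.le_iff_forall_eq_one (ha : IsBin a) (hb : IsBin b) :
    a ≤ b ↔ ∀ k, a k = 1 → b k = 1 := by
  rw [ha.le_iff_forall_eq_zero hb]
  refine forall_congr' fun k => ?_
  rcases ha k with hak | hak <;> rcases hb k with hbk | hbk <;> simp [hak, hbk]

lemma isBin_T (v : Fin K → ℝ) : IsBin (T v) := fun k => by
  unfold T
  split_ifs <;> simp

lemma T_eq_zero_iff {v : Fin K → ℝ} {k : Fin K} (hv : 0 ≤ v k) : T v k = 0 ↔ v k = 0 := by
  simp only [T, ite_eq_right_iff, one_ne_zero, imp_false, not_lt]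
  exact ⟨fun h => le_antisymm h hv, le_of_eq⟩

lemma T_mono : Monotone (T (K := K)) := fun v w hvw k => by
  unfold T
  split_ifs with hv hw <;> first | exact absurd (hv.trans_le (hvw k)) hw | norm_num

end Binary

section Silhouette

variable {M N : ℕ} {H : Fin M → Fin N → ℝ}

lemma mulv_mono (hH : ∀ m n, 0 ≤ H m n) : Monotone (mulv H) := fun _ _ hxy m =>
  sum_le_sum fun n _ => mul_le_mul_of_nonneg_left (hxy n) (hH m n)

lemma mulv_nonneg (hH : ∀ m n, 0 ≤ H m n) {x : Fin N → ℝ} (hx : 0 ≤ x) : 0 ≤ mulv H x :=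
  fun m => sum_nonneg fun n _ => mul_nonneg (hH m n) (hx n)

lemma mulv_eq_zero_iff (hH : ∀ m n, 0 ≤ H m n) {x : Fin N → ℝ} (hx : 0 ≤ x) (m : Fin M) :
    mulv H x m = 0 ↔ ∀ n, H m n * x n = 0 := by
  simpa [mulv] using sum_eq_zero_iff_of_nonneg (s := univ) fun n _ => mul_nonneg (hH m n) (hx n)

lemma isBin_S (H : Fin M → Fin N → ℝ) (x : Fin N → ℝ) : IsBin (S H x) := isBin_T _

lemma S_mono (hH : ∀ m n, 0 ≤ H m n) : Monotone (S H) := T_mono.comp (mulv_mono hH)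

lemma isBin_xmax (H : Fin M → Fin N → ℝ) (y : Fin M → ℝ) : IsBin (xmax H y) := fun n => by
  rcases isBin_T (mulv (tr H) (bneg y)) n with h | h <;> simp [xmax, bneg, h]

lemma S_eq_zero_iff (hH : ∀ m n, 0 ≤ H m n) {z : Fin N → ℝ} (hz : IsBin z) (m : Fin M) :
    S H z m = 0 ↔ ∀ n, z n = 1 → H m n = 0 := by
  rw [S, T_eq_zero_iff (mulv_nonneg hH hz.nonneg_s12 m), mulv_eq_zero_iff hH hz.nonneg_s12]
  refine forall_congr' fun n => ?_
  rcases hz n with h | h <;> simp [h]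

lemma xmax_eq_one_iff (hH : ∀ m n, 0 ≤ H m n) {y : Fin M → ℝ} (hy : IsBin y) (n : Fin N) :
    xmax H y n = 1 ↔ ∀ m, y m = 0 → H m n = 0 := by
  have hy' : IsBin (bneg y) := fun m => by rcases hy m with h | h <;> simp [bneg, h]
  have hH' : ∀ n m, 0 ≤ tr H n m := fun n m => hH m n
  rw [xmax, bneg, sub_eq_self, T_eq_zero_iff (mulv_nonneg hH' hy'.nonneg_s12 n),
    mulv_eq_zero_iff hH' hy'.nonneg_s12]
  refine forall_congr' fun m => ?_
  rcases hy m with h | h <;> simp [tr, bneg, h]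

lemma S_le_iff_le_xmax (hH : ∀ m n, 0 ≤ H m n) {z : Fin N → ℝ} (hz : IsBin z)
    {y : Fin M → ℝ} (hy : IsBin y) : S H z ≤ y ↔ z ≤ xmax H y := by
  rw [(isBin_S H z).le_iff_forall_eq_zero hy, hz.le_iff_forall_eq_one (isBin_xmax H y)]
  simp only [S_eq_zero_iff hH hz, xmax_eq_one_iff hH hy]
  exact ⟨fun h n hn m hm => h m hm n hn, fun h m hm n hn => h n hn m hm⟩

end Silhouette

theorem stmt_12_general {M N : ℕ} (H : Fin M → Fin N → ℝ) (hH : ∀ m n, 0 ≤ H m n)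
    (y : Fin M → ℝ) :
    (∃ z : Fin N → ℝ, IsBin z ∧ S H z = y) ↔ S H (xmax H y) = y := by
  refine ⟨?_, fun h => ⟨xmax H y, isBin_xmax H y, h⟩⟩
  rintro ⟨z, hz, rfl⟩
  have hy := isBin_S H z
  have hxmax := isBin_xmax H (S H z)
  refine le_antisymm ((S_le_iff_le_xmax hH hxmax hy).mpr le_rfl) (S_mono hH ?_)
  exact (S_le_iff_le_xmax hH hz hy).mp le_rfl

theorem stmt_12 {M N : ℕ} (H : Fin M → Fin N → ℝ) (hH : ∀ m n, 0 ≤ H m n)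
    (y : Fin M → ℝ) (hy : IsBin y) :
    (∃ z : Fin N → ℝ, IsBin z ∧ S H z = y) ↔ S H (xmax H y) = y :=
  stmt_12_general H hH y
end

section
/- Let H have nonnegative entries and x be binary. Then S(x_max(S(x))) = S(x), i.e., the maximal reconstruction of the silhouette of x has the same silhouette as x. -/
open Finset

theorem stmt_14 {M N : ℕ} (H : Fin M → Fin N → ℝ) (hH : ∀ m n, 0 ≤ H m n)
    (x : Fin N → ℝ) (hx : IsBin x) :
    S H (xmax H (S H x)) = S H x := by
  set y := S H x with hy
  have hybin : ∀ m, y m = 0 ∨ y m = 1 := by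
    intro m; simp only [hy, S, T]; by_cases h : 0 < mulv H x m <;> simp [h]
  have hxnn : ∀ n, 0 ≤ x n := fun n => by rcases hx n with h | h <;> simp [h]
  have hz : ∀ n, 0 ≤ mulv (tr H) (bneg y) n := by
    intro n
    apply Finset.sum_nonneg
    intro m _
    have : y m ≤ 1 := by rcases hybin m with h | h <;> simp [h]
    exact mul_nonneg (hH m n) (by simp [bneg]; linarith)
  have hxmbin : ∀ n, xmax H y n = 0 ∨ xmax H y n = 1 := by
    intro n; simp only [xmax, bneg, T]
    by_cases h : 0 < mulv (tr H) (bneg y) n <;> simp [h]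
  have hxmnn : ∀ n, 0 ≤ xmax H y n := fun n => by rcases hxmbin n with h | h <;> simp [h]
  funext m
  simp only [S, T]
  congr 1
  rw [eq_iff_iff]
  constructor
  · -- forward: 0 < H (xmax) m → 0 < H x m
    intro hpos
    by_contra hneg
    push_neg at hneg
    -- get n with H m n * xmax n > 0
    have hex : ∃ n, 0 < H m n * xmax H y n := by
      by_contra hc
      push_neg at hc
      have : mulv H (xmax H y) m ≤ 0 := Finset.sum_nonpos (fun n _ => hc n)
      linarith
    obtain ⟨n, hn⟩ := hex
    have hHmn : 0 < H m n := by
      rcases (hH m n).lt_or_eq with h | h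
      · exact h
      · exfalso; rw [← h] at hn; simp at hn
    have hxm1 : xmax H y n = 1 := by
      rcases hxmbin n with h | h
      · rw [h] at hn; simp at hn
      · exact h
    -- so T(...) n = 0, so sum ≤ 0, hence = 0, each term 0
    have hT0 : ¬ (0 < mulv (tr H) (bneg y) n) := by
      intro h
      simp only [xmax, bneg, T, h, if_pos] at hxm1
      norm_num at hxm1
    have hsum0 : mulv (tr H) (bneg y) n = 0 := le_antisymm (not_lt.mp hT0) (hz n)
    have hterm : ∀ m' ∈ Finset.univ, H m' n * bneg y m' = 0 := by
      rw [← Finset.sum_eq_zero_iff_of_nonneg]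
      · exact hsum0
      · intro m' _
        have : y m' ≤ 1 := by rcases hybin m' with h | h <;> simp [h]
        exact mul_nonneg (hH m' n) (by simp [bneg]; linarith)
    have := hterm m (Finset.mem_univ m)
    have hym : y m = 1 := by
      rcases mul_eq_zero.mp this with h | h
      · linarith
      · simp [bneg] at h; linarith
    -- but y m = 1 means 0 < mulv H x m, contradiction
    simp only [hy, S, T] at hym
    by_cases h : 0 < mulv H x m
    · linarith
    · simp [h] at hym
  · -- backward: 0 < H x m → 0 < H (xmax) m
    intro hpos
    have hex : ∃ n, 0 < H m n * x n := by
      by_contra hc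
      push_neg at hc
      have : mulv H x m ≤ 0 := Finset.sum_nonpos (fun n _ => hc n)
      linarith
    obtain ⟨n, hn⟩ := hex
    have hHmn : 0 < H m n := by
      rcases (hH m n).lt_or_eq with h | h
      · exact h
      · exfalso; rw [← h] at hn; simp at hn
    have hxn1 : x n = 1 := by
      rcases hx n with h | h
      · rw [h] at hn; simp at hn
      · exact h
    -- show xmax n = 1
    have hsum0 : mulv (tr H) (bneg y) n = 0 := by
      apply le_antisymm _ (hz n)
      apply Finset.sum_nonpos
      intro m' _
      rcases (hH m' n).lt_or_eq with h | h
      · -- H m' n > 0 ⇒ y m' = 1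
        have hpos' : 0 < mulv H x m' := by
          have : H m' n * x n ≤ mulv H x m' :=
            Finset.single_le_sum (fun k _ => mul_nonneg (hH m' k) (hxnn k))
              (Finset.mem_univ n)
          rw [hxn1] at this; linarith
        have : y m' = 1 := by simp [hy, S, T, hpos']
        simp [tr, bneg, this]
      · simp [tr, ← h]
    have hxm1 : xmax H y n = 1 := by
      simp [xmax, bneg, T, hsum0]
    have : H m n * xmax H y n ≤ mulv H (xmax H y) m :=
      Finset.single_le_sum (fun k _ => mul_nonneg (hH m k) (hxmnn k)) (Finset.mem_univ n)
    rw [hxm1] at this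
    linarith
end

section
/- Let H have nonnegative entries and y₁, y₂ ∈ {0,1}^M both admit binary solutions z₁, z₂ to T(Hz_i) = y_i. Then the entrywise maximum max(y₁, y₂) also admits a binary solution, namely max(z₁, z₂). -/
open Finset

theorem stmt_19 {M N : ℕ} (H : Fin M → Fin N → ℝ) (hH : ∀ m n, 0 ≤ H m n)
    (y₁ y₂ : Fin M → ℝ) (hy₁ : IsBin y₁) (hy₂ : IsBin y₂)
    (z₁ z₂ : Fin N → ℝ) (hz₁ : IsBin z₁) (hz₂ : IsBin z₂)
    (h₁ : S H z₁ = y₁) (h₂ : S H z₂ = y₂) :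
    S H (fun n => max (z₁ n) (z₂ n)) = fun m => max (y₁ m) (y₂ m) := by
  subst h₁ h₂
  funext m
  have hnn : ∀ (z : Fin N → ℝ), IsBin z → ∀ n, 0 ≤ z n := by
    intro z hz n; rcases hz n with h | h <;> simp [h]
  have ha : 0 ≤ mulv H z₁ m := Finset.sum_nonneg fun n _ =>
    mul_nonneg (hH m n) (hnn z₁ hz₁ n)
  have hb : 0 ≤ mulv H z₂ m := Finset.sum_nonneg fun n _ =>
    mul_nonneg (hH m n) (hnn z₂ hz₂ n)
  have h1 : mulv H z₁ m ≤ mulv H (fun n => max (z₁ n) (z₂ n)) m :=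
    Finset.sum_le_sum fun n _ => mul_le_mul_of_nonneg_left (le_max_left _ _) (hH m n)
  have h2 : mulv H z₂ m ≤ mulv H (fun n => max (z₁ n) (z₂ n)) m :=
    Finset.sum_le_sum fun n _ => mul_le_mul_of_nonneg_left (le_max_right _ _) (hH m n)
  have h3 : mulv H (fun n => max (z₁ n) (z₂ n)) m ≤ mulv H z₁ m + mulv H z₂ m := by
    rw [mulv, mulv, mulv, ← Finset.sum_add_distrib]
    refine Finset.sum_le_sum fun n _ => ?_
    rw [← mul_add]
    refine mul_le_mul_of_nonneg_left ?_ (hH m n)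
    rcases le_total (z₁ n) (z₂ n) with h | h
    · rw [max_eq_right h]; linarith [hnn z₁ hz₁ n]
    · rw [max_eq_left h]; linarith [hnn z₂ hz₂ n]
  have key : (0 < mulv H (fun n => max (z₁ n) (z₂ n)) m) ↔
      (0 < mulv H z₁ m ∨ 0 < mulv H z₂ m) := by
    constructor
    · intro h
      by_contra hc
      push_neg at hc
      have e1 : mulv H z₁ m = 0 := le_antisymm hc.1 ha
      have e2 : mulv H z₂ m = 0 := le_antisymm hc.2 hb
      rw [e1, e2] at h3; linarith
    · rintro (h | h)
      · exact lt_of_lt_of_le h h1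
      · exact lt_of_lt_of_le h h2
  simp only [S, T, key]
  by_cases c1 : 0 < mulv H z₁ m <;> by_cases c2 : 0 < mulv H z₂ m <;>
    simp [c1, c2]
end
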